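/- Let A be a strongly connected signed interaction matrix. Then: (i) A induces a nontrivial polarization if and only if A is opposition bipartite and aperiodic; (ii) A is divergent if and only if A is reverse opposition bipartite; (iii) A induces a neutral consensus if and only if A is neither opposition bipartite nor reverse opposition bipartite. -/

import Mathlib

/-!
The entries of `A` are dominated by those of `|A|`, a symmetric stochastic matrix, so the
eigenvalues of the symmetric matrix `A` lie in `[-1, 1]` and `A^t b` converges for every `b`
unless `-1` is an eigenvalue. A maximum principle along the strongly connected graph of `A` shows
that an eigenvector for `±1` has entries of constant modulus whose signs `s` satisfy
`s i * A i j * s j = ±|A i j|`; such sign vectors are exactly the partitions witnessing `OppBip`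
(for `1`) and `RevOppBip` (for `-1`). For an opposition bipartite `A`, being reverse opposition
bipartite as well amounts to the graph of `A` being bipartite, i.e. to `A` being periodic.
-/

open Filter

variable {n : ℕ}

/-- Entrywise absolute value of a matrix. -/
def absMat (A : Matrix (Fin n) (Fin n) ℝ) : Matrix (Fin n) (Fin n) ℝ :=
  A.map fun x => |x|

/-- `A` is strongly connected: for all `i j` there is `k ≥ 1` with `(|A|^k)_{ij} > 0`. -/
def StronglyConnected (A : Matrix (Fin n) (Fin n) ℝ) : Prop :=
  ∀ i j, ∃ k : ℕ, 1 ≤ k ∧ 0 < (absMat A ^ k) i j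

/-- `A` is aperiodic: for each `i`, the gcd of `{k ≥ 1 : (|A|^k)_{ii} > 0}` is `1`,
phrased as: every common divisor of that set equals `1`. -/
def Aperiodic (A : Matrix (Fin n) (Fin n) ℝ) : Prop :=
  ∀ i, ∀ d : ℕ, (∀ k : ℕ, 1 ≤ k → 0 < (absMat A ^ k) i i → d ∣ k) → d = 1

/-- `A` is opposition bipartite: a two-set partition (given by `S` and its
complement) with nonnegative entries within sets and nonpositive across. -/
def OppBip (A : Matrix (Fin n) (Fin n) ℝ) : Prop :=
  ∃ S : Set (Fin n), ∀ i j,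
    (((i ∈ S ∧ j ∈ S) ∨ (i ∉ S ∧ j ∉ S)) → 0 ≤ A i j) ∧
    (((i ∈ S ∧ j ∉ S) ∨ (i ∉ S ∧ j ∈ S)) → A i j ≤ 0)

/-- `A` is reverse opposition bipartite: nonpositive entries within sets and
nonnegative across. -/
def RevOppBip (A : Matrix (Fin n) (Fin n) ℝ) : Prop :=
  ∃ S : Set (Fin n), ∀ i j,
    (((i ∈ S ∧ j ∈ S) ∨ (i ∉ S ∧ j ∉ S)) → A i j ≤ 0) ∧
    (((i ∈ S ∧ j ∉ S) ∨ (i ∉ S ∧ j ∈ S)) → 0 ≤ A i j)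

/-- `A` is divergent: some initial vector has no limit under iteration. -/
def Divergent (A : Matrix (Fin n) (Fin n) ℝ) : Prop :=
  ∃ b₀ : Fin n → ℝ, ¬ ∃ L : Fin n → ℝ,
    Tendsto (fun t => (A ^ t).mulVec b₀) atTop (nhds L)

/-- `A` induces a neutral consensus: iterates converge to `0` from every start. -/
def NeutralConsensus (A : Matrix (Fin n) (Fin n) ℝ) : Prop :=
  ∀ b₀ : Fin n → ℝ, Tendsto (fun t => (A ^ t).mulVec b₀) atTop (nhds 0)

/-- A vector is a polarization if its entries take at most two values. -/
def IsPolarization (p : Fin n → ℝ) : Prop :=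
  ∃ a b : ℝ, ∀ i, p i = a ∨ p i = b

/-- `A` induces a nontrivial polarization: from every start the limit exists
and is a polarization, and from some start the limit is nonzero. -/
def InducesNontrivialPolarization (A : Matrix (Fin n) (Fin n) ℝ) : Prop :=
  (∀ b₀ : Fin n → ℝ, ∃ L : Fin n → ℝ,
      Tendsto (fun t => (A ^ t).mulVec b₀) atTop (nhds L) ∧ IsPolarization L) ∧
  (∃ (b₀ L : Fin n → ℝ),
      Tendsto (fun t => (A ^ t).mulVec b₀) atTop (nhds L) ∧ L ≠ 0)

open Matrix Topology

lemma exists_tendsto_pow_of_abs_le_one {μ : ℝ} (h : |μ| ≤ 1) (h' : μ ≠ -1) :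
    ∃ l, Tendsto (fun t : ℕ => μ ^ t) atTop (𝓝 l) := by
  rcases eq_or_ne μ 1 with rfl | h1
  · exact ⟨1, by simp⟩
  · refine ⟨0, tendsto_pow_atTop_nhds_zero_of_abs_lt_one (h.lt_of_ne ?_)⟩
    intro habs
    rcases abs_eq zero_le_one |>.mp habs with h2 | h2 <;> contradiction

namespace Matrix
variable {m : Type*} [Fintype m] [DecidableEq m] {A : Matrix m m ℝ}

lemma pow_mulVec_of_mulVec_eq_smul {μ : ℝ} {v : m → ℝ} (hv : A *ᵥ v = μ • v) (t : ℕ) :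
    (A ^ t) *ᵥ v = μ ^ t • v := by
  induction t with
  | zero => simp
  | succ t ih => rw [pow_succ', ← mulVec_mulVec, ih, mulVec_smul, hv, smul_smul, pow_succ]

lemma mulVec_eq_of_tendsto_pow_mulVec {b L : m → ℝ}
    (h : Tendsto (fun t => (A ^ t) *ᵥ b) atTop (𝓝 L)) : A *ᵥ L = L := by
  have hcont : Continuous (A *ᵥ · : (m → ℝ) → m → ℝ) :=
    continuous_const.matrix_mulVec continuous_id
  have hlim := (hcont.tendsto L).comp h
  simp only [Function.comp_def, mulVec_mulVec, ← pow_succ'] at hlim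
  exact tendsto_nhds_unique hlim (h.comp (tendsto_add_atTop_nat 1))

lemma not_tendsto_pow_mulVec_of_mulVec_eq_neg {v : m → ℝ} (hv : A *ᵥ v = -v) (hv0 : v ≠ 0)
    (L : m → ℝ) : ¬ Tendsto (fun t => (A ^ t) *ᵥ v) atTop (𝓝 L) := by
  intro h
  have hpow (t : ℕ) : (A ^ t) *ᵥ v = (-1 : ℝ) ^ t • v :=
    pow_mulVec_of_mulVec_eq_smul (by rw [hv, neg_one_smul]) t
  have hnorm : ‖L‖ = ‖v‖ := tendsto_nhds_unique h.norm (by simp [hpow, norm_smul])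
  have hshift : Tendsto (fun t => -((A ^ t) *ᵥ v)) atTop (𝓝 L) := by
    convert h.comp (tendsto_add_atTop_nat 1) using 2 with t
    simp [hpow, pow_succ]
  have hL : L = 0 := self_eq_neg.mp (tendsto_nhds_unique hshift h.neg)
  exact hv0 (norm_eq_zero.mp (by rw [← hnorm, hL, norm_zero]))

lemma abs_le_of_mulVec_eq_smul {r μ : ℝ} {v : m → ℝ} (hrow : ∀ i, ∑ j, |A i j| ≤ r)
    (hv : A *ᵥ v = μ • v) (hv0 : v ≠ 0) : |μ| ≤ r := by
  obtain ⟨k, hk⟩ := eigenvalue_mem_ball (A := A)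
    (Module.End.hasEigenvalue_of_hasEigenvector ⟨by simpa [Module.End.mem_eigenspace_iff], hv0⟩)
  rw [Metric.mem_closedBall, Real.dist_eq] at hk
  calc |μ| ≤ |A k k| + |μ - A k k| := by simpa using abs_add_le (A k k) (μ - A k k)
    _ ≤ ∑ j, |A k j| := by
      rw [← Finset.add_sum_erase _ _ (Finset.mem_univ k)]
      simpa only [Real.norm_eq_abs, add_le_add_iff_left] using hk
    _ ≤ r := hrow k

lemma IsHermitian.exists_tendsto_pow (hA : A.IsHermitian)
    (h : ∀ i, ∃ l, Tendsto (fun t : ℕ => hA.eigenvalues i ^ t) atTop (𝓝 l)) :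
    ∃ P, Tendsto (fun t : ℕ => A ^ t) atTop (𝓝 P) := by
  choose l hl using h
  set U := hA.eigenvectorUnitary
  refine ⟨U * diagonal l * star (U : Matrix m m ℝ), ?_⟩
  have hpow (t : ℕ) :
      A ^ t = U * diagonal (fun i => hA.eigenvalues i ^ t) * star (U : Matrix m m ℝ) := by
    conv_lhs => rw [hA.spectral_theorem]
    rw [← map_pow, diagonal_pow]
    rfl
  simp_rw [hpow]
  have hconj : Continuous fun D : Matrix m m ℝ => U * D * star (U : Matrix m m ℝ) :=
    (continuous_const.matrix_mul continuous_id).matrix_mul continuous_const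
  exact (hconj.tendsto _).comp ((continuous_id.matrix_diagonal.tendsto _).comp
    (tendsto_pi_nhds.mpr hl))

lemma IsSymm.exists_tendsto_pow_mulVec (hsym : A.IsSymm) (hrow : ∀ i, ∑ j, |A i j| ≤ 1)
    (hneg : ∀ v, A *ᵥ v = -v → v = 0) (b : m → ℝ) :
    ∃ L, Tendsto (fun t => (A ^ t) *ᵥ b) atTop (𝓝 L) := by
  have hA : A.IsHermitian := isHermitian_iff_isSymm.mpr hsym
  obtain ⟨P, hP⟩ := hA.exists_tendsto_pow fun i => by
    have hv := hA.mulVec_eigenvectorBasis i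
    have hv0 : ⇑(hA.eigenvectorBasis i) ≠ 0 := fun h =>
      hA.eigenvectorBasis.orthonormal.ne_zero i ((WithLp.ofLp_eq_zero 2).mp h)
    refine exists_tendsto_pow_of_abs_le_one (abs_le_of_mulVec_eq_smul hrow hv hv0) fun h => hv0 ?_
    exact hneg _ (by rw [hv, h, neg_one_smul])
  exact ⟨P *ᵥ b, ((continuous_id.matrix_mulVec continuous_const).tendsto P).comp hP⟩

end Matrix

variable {A : Matrix (Fin n) (Fin n) ℝ}

lemma absMat_apply (A : Matrix (Fin n) (Fin n) ℝ) (i j : Fin n) : absMat A i j = |A i j| := rfl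

lemma absMat_pow_apply_nonneg (A : Matrix (Fin n) (Fin n) ℝ) (k : ℕ) (i j : Fin n) :
    0 ≤ (absMat A ^ k) i j :=
  pow_apply_nonneg (fun _ _ => abs_nonneg _) k i j

lemma absMat_pow_add_pos {k l : ℕ} {i j m : Fin n} (h₁ : 0 < (absMat A ^ k) i j)
    (h₂ : 0 < (absMat A ^ l) j m) : 0 < (absMat A ^ (k + l)) i m := by
  rw [pow_add, mul_apply]
  exact (mul_pos h₁ h₂).trans_le <| Finset.single_le_sum
    (f := fun x => (absMat A ^ k) i x * (absMat A ^ l) x m)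
    (fun _ _ => mul_nonneg (absMat_pow_apply_nonneg A _ _ _) (absMat_pow_apply_nonneg A _ _ _))
    (Finset.mem_univ j)

lemma absMat_pow_apply_comm (hsym : A.IsSymm) (k : ℕ) (i j : Fin n) :
    (absMat A ^ k) i j = (absMat A ^ k) j i :=
  ((hsym.map _).pow k).apply j i

lemma StronglyConnected.forall_of_closed (hsc : StronglyConnected A) {P : Fin n → Prop}
    (hP : ∀ i j, A i j ≠ 0 → P i → P j) {i : Fin n} (hi : P i) (j : Fin n) : P j := by
  have hwalk (k : ℕ) : ∀ i j, (absMat A ^ k) i j ≠ 0 → P i → P j := by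
    induction k with
    | zero =>
      intro i j hij hi
      obtain rfl : i = j := by_contra fun h => hij (by simp [one_apply, h])
      exact hi
    | succ k ih =>
      intro i j hij hi
      rw [pow_succ, mul_apply] at hij
      obtain ⟨l, -, hl⟩ := Finset.exists_ne_zero_of_sum_ne_zero hij
      exact hP l j (abs_ne_zero.mp (right_ne_zero_of_mul hl)) (ih i l (left_ne_zero_of_mul hl) hi)
  obtain ⟨k, -, hk⟩ := hsc i j
  exact hwalk k i j hk.ne' hi

-- entrywise form of `diagonal s * A * diagonal s = c • absMat A` for a `±1` vector `s`
def SignSwitching (A : Matrix (Fin n) (Fin n) ℝ) (c : ℝ) (s : Fin n → ℝ) : Prop :=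
  (∀ i, s i = 1 ∨ s i = -1) ∧ ∀ i j, s i * A i j * s j = c * |A i j|

namespace SignSwitching

variable {c : ℝ} {s : Fin n → ℝ}

lemma mul_self (hs : SignSwitching A c s) (i : Fin n) : s i * s i = 1 :=
  mul_self_eq_one_iff.mpr (hs.1 i)

lemma ne_zero [Nonempty (Fin n)] (hs : SignSwitching A c s) : s ≠ 0 := by
  intro h
  have := hs.mul_self (Classical.arbitrary _)
  simp [h] at this

lemma mulVec_eq (hs : SignSwitching A c s) (hrow : ∀ i, ∑ j, |A i j| = 1) : A *ᵥ s = c • s := by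
  funext i
  calc (A *ᵥ s) i = s i * ∑ j, s i * A i j * s j := by
        simp only [mulVec, dotProduct, Finset.mul_sum]
        refine Finset.sum_congr rfl fun j _ => ?_
        linear_combination (-(A i j * s j)) * hs.mul_self i
    _ = (c • s) i := by
        simp only [hs.2 i, ← Finset.mul_sum, hrow i, Pi.smul_apply, smul_eq_mul]
        ring

lemma pow_apply_self (hs : SignSwitching A c s) (k : ℕ) (i : Fin n) :
    (A ^ k) i i = c ^ k * (absMat A ^ k) i i := by
  have hD : diagonal s * diagonal s = 1 := by
    rw [diagonal_mul_diagonal, ← diagonal_one]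
    exact congrArg diagonal (funext hs.mul_self)
  have hconj : diagonal s * A * diagonal s = c • absMat A := by
    ext i j
    simp [hs.2 i j, absMat_apply]
  have hpow : diagonal s * A ^ k * diagonal s = c ^ k • absMat A ^ k := by
    induction k with
    | zero => simp [hD]
    | succ k ih =>
      calc diagonal s * A ^ (k + 1) * diagonal s
          = (diagonal s * A ^ k * diagonal s) * (diagonal s * A * diagonal s) := by
            simp only [pow_succ, mul_assoc, ← mul_assoc (diagonal s) (diagonal s), hD, one_mul]
        _ = c ^ (k + 1) • absMat A ^ (k + 1) := by
            rw [ih, hconj, smul_mul_smul_comm, pow_succ, pow_succ]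
  have := congrFun (congrFun hpow i) i
  simp only [mul_diagonal, diagonal_mul, Matrix.smul_apply, smul_eq_mul] at this
  linear_combination this - (A ^ k) i i * hs.mul_self i

lemma mul_of_alternating (hs : SignSwitching A c s) {w : Fin n → ℝ}
    (hw : ∀ i, w i = 1 ∨ w i = -1) (halt : ∀ i j, A i j ≠ 0 → w j = -w i) :
    SignSwitching A (-c) (s * w) := by
  refine ⟨fun i => ?_, fun i j => ?_⟩
  · rcases hs.1 i with h | h <;> rcases hw i with h' | h' <;> simp [h, h']
  · rcases eq_or_ne (A i j) 0 with h0 | h0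
    · simp [h0]
    · simp only [Pi.mul_apply, halt i j h0]
      linear_combination (-(w i * w i)) * hs.2 i j - c * |A i j| * mul_self_eq_one_iff.mpr (hw i)

end SignSwitching

lemma oppBip_iff_exists_signSwitching : OppBip A ↔ ∃ s, SignSwitching A 1 s := by
  classical
  constructor
  · rintro ⟨S, hS⟩
    refine ⟨fun i => if i ∈ S then 1 else -1, fun i => by by_cases hi : i ∈ S <;> simp [hi],
      fun i j => ?_⟩
    by_cases hi : i ∈ S <;> by_cases hj : j ∈ S
    · simp [hi, hj, abs_of_nonneg ((hS i j).1 (Or.inl ⟨hi, hj⟩))]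
    · simp [hi, hj, abs_of_nonpos ((hS i j).2 (Or.inl ⟨hi, hj⟩))]
    · simp [hi, hj, abs_of_nonpos ((hS i j).2 (Or.inr ⟨hi, hj⟩))]
    · simp [hi, hj, abs_of_nonneg ((hS i j).1 (Or.inr ⟨hi, hj⟩))]
  · rintro ⟨s, hs⟩
    refine ⟨{i | s i = 1}, fun i j => ?_⟩
    have h := hs.2 i j
    rcases hs.1 i with hi | hi <;> rcases hs.1 j with hj | hj <;> norm_num [hi, hj] at h ⊢ <;>
      linarith [abs_nonneg (A i j)]

lemma revOppBip_iff_exists_signSwitching : RevOppBip A ↔ ∃ s, SignSwitching A (-1) s := by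
  classical
  constructor
  · rintro ⟨S, hS⟩
    refine ⟨fun i => if i ∈ S then 1 else -1, fun i => by by_cases hi : i ∈ S <;> simp [hi],
      fun i j => ?_⟩
    by_cases hi : i ∈ S <;> by_cases hj : j ∈ S
    · simp [hi, hj, abs_of_nonpos ((hS i j).1 (Or.inl ⟨hi, hj⟩))]
    · simp [hi, hj, abs_of_nonneg ((hS i j).2 (Or.inl ⟨hi, hj⟩))]
    · simp [hi, hj, abs_of_nonneg ((hS i j).2 (Or.inr ⟨hi, hj⟩))]
    · simp [hi, hj, abs_of_nonpos ((hS i j).1 (Or.inr ⟨hi, hj⟩))]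
  · rintro ⟨s, hs⟩
    refine ⟨{i | s i = 1}, fun i j => ?_⟩
    have h := hs.2 i j
    rcases hs.1 i with hi | hi <;> rcases hs.1 j with hj | hj <;> norm_num [hi, hj] at h ⊢ <;>
      linarith [abs_nonneg (A i j)]

lemma mul_mul_eq_of_abs_eq_max {c M : ℝ} {v : Fin n → ℝ} (hrow : ∀ i, ∑ j, |A i j| = 1)
    (hc : |c| = 1) (hv : A *ᵥ v = c • v) (hM : ∀ j, |v j| ≤ M) (i : Fin n) (hi : |v i| = M)
    (j : Fin n) : c * (v i * A i j * v j) = M ^ 2 * |A i j| := by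
  have hM0 : 0 ≤ M := hi ▸ abs_nonneg _
  have hle : ∀ j ∈ Finset.univ, c * (v i * A i j * v j) ≤ M ^ 2 * |A i j| := fun j _ =>
    calc c * (v i * A i j * v j) ≤ |c * (v i * A i j * v j)| := le_abs_self _
      _ = M * |A i j| * |v j| := by simp only [abs_mul, hc, hi, one_mul]
      _ ≤ M * |A i j| * M := by gcongr; exact hM j
      _ = M ^ 2 * |A i j| := by ring
  have hsum : ∑ j, c * (v i * A i j * v j) = ∑ j, M ^ 2 * |A i j| := by
    have hvi : (A *ᵥ v) i = c * v i := by rw [hv]; rfl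
    calc ∑ j, c * (v i * A i j * v j) = c * v i * (A *ᵥ v) i := by
          simp only [mulVec, dotProduct, Finset.mul_sum]
          exact Finset.sum_congr rfl fun j _ => by ring
      _ = |c| ^ 2 * |v i| ^ 2 := by rw [hvi, sq_abs, sq_abs]; ring
      _ = ∑ j, M ^ 2 * |A i j| := by rw [← Finset.mul_sum, hrow i, hc, hi]; ring
  exact (Finset.sum_eq_sum_iff_of_le hle).mp hsum j (Finset.mem_univ j)

lemma exists_signSwitching_of_mulVec_eq_smul {c : ℝ} {v : Fin n → ℝ}
    (hrow : ∀ i, ∑ j, |A i j| = 1) (hsc : StronglyConnected A) (hc : |c| = 1)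
    (hv : A *ᵥ v = c • v) (hv0 : v ≠ 0) :
    ∃ M : ℝ, 0 < M ∧ ∃ s, SignSwitching A c s ∧ v = M • s := by
  obtain ⟨j₀, hj₀⟩ := Function.ne_iff.mp hv0
  obtain ⟨i₀, -, hmax⟩ := Finset.exists_max_image Finset.univ (fun i => |v i|)
    ⟨j₀, Finset.mem_univ _⟩
  set M := |v i₀|
  have hM (j : Fin n) : |v j| ≤ M := hmax j (Finset.mem_univ j)
  have hkey := mul_mul_eq_of_abs_eq_max hrow hc hv hM
  have hclosed (i j : Fin n) (hij : A i j ≠ 0) (hi : |v i| = M) : |v j| = M := by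
    have h : M ^ 2 * |A i j| ≤ M * |A i j| * |v j| := by
      rw [← hkey i hi j]
      exact (le_abs_self _).trans_eq (by simp only [abs_mul, hc, hi, one_mul])
    have hA : 0 < |A i j| := abs_pos.mpr hij
    refine le_antisymm (hM j) (not_lt.mp fun hlt => ?_)
    have hMpos : 0 < M := (abs_nonneg _).trans_lt hlt
    nlinarith [mul_pos (mul_pos hMpos hA) (sub_pos.mpr hlt)]
  have habs : ∀ j, |v j| = M := hsc.forall_of_closed hclosed (i := i₀) rfl
  have hMpos : 0 < M := habs j₀ ▸ abs_pos.mpr hj₀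
  refine ⟨M, hMpos, M⁻¹ • v, ⟨fun i => ?_, fun i j => ?_⟩, by simp [smul_smul, hMpos.ne']⟩
  · rcases abs_eq hMpos.le |>.mp (habs i) with h | h <;> simp [h, hMpos.ne']
  · have hcc : c * c = 1 := by rw [← abs_mul_abs_self, hc, one_mul]
    simp only [Pi.smul_apply, smul_eq_mul]
    field_simp
    linear_combination c * hkey i (habs i) j - (v i * A i j * v j) * hcc

lemma exists_alternating_of_not_aperiodic (hsym : A.IsSymm) (hrow : ∀ i, ∑ j, |A i j| = 1)
    (hsc : StronglyConnected A) (hap : ¬Aperiodic A) :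
    ∃ w : Fin n → ℝ, (∀ i, w i = 1 ∨ w i = -1) ∧ ∀ i j, A i j ≠ 0 → w j = -w i := by
  simp only [Aperiodic, not_forall] at hap
  obtain ⟨i₀, d, hd, hd1⟩ := hap
  -- going to a neighbour and back is a closed walk of length 2, so the period is 2
  have heven : ∀ k, 0 < (absMat A ^ k) i₀ i₀ → Even k := by
    obtain ⟨j, hj⟩ : ∃ j, A i₀ j ≠ 0 := by
      by_contra! h
      simpa [h] using hrow i₀
    have h₁ : 0 < (absMat A ^ 1) i₀ j := by simpa [absMat_apply] using hj
    have h₂ : 0 < (absMat A ^ 1) j i₀ := by rwa [absMat_pow_apply_comm hsym]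
    have hd2 : d = 2 := (Nat.prime_two.eq_one_or_self_of_dvd d
      (hd 2 one_le_two (absMat_pow_add_pos h₁ h₂))).resolve_left hd1
    intro k hk
    rcases Nat.eq_zero_or_pos k with rfl | hk1
    · exact Even.zero
    · exact even_iff_two_dvd.mpr (hd2 ▸ hd k hk1 hk)
  choose k _ hk using hsc i₀
  refine ⟨fun j => (-1) ^ k j, fun j => neg_one_pow_eq_or ℝ (k j), fun i j hij => ?_⟩
  have hedge : 0 < (absMat A ^ 1) i j := by simpa [absMat_apply] using hij
  have hback : 0 < (absMat A ^ k j) j i₀ := by rw [absMat_pow_apply_comm hsym]; exact hk j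
  have hcycle := heven _ (absMat_pow_add_pos (absMat_pow_add_pos (hk i) hedge) hback)
  rw [Nat.even_add, Nat.even_add_one] at hcycle
  rcases Nat.even_or_odd (k i) with hi | hi
  · have hj : Odd (k j) := Nat.not_even_iff_odd.mp fun hj => hcycle.mpr hj hi
    simp [hi.neg_one_pow, hj.neg_one_pow]
  · have hj : Even (k j) := hcycle.mp (Nat.not_even_iff_odd.mpr hi)
    simp [hi.neg_one_pow, hj.neg_one_pow]

lemma not_aperiodic_of_oppBip_of_revOppBip [Nonempty (Fin n)] (hopp : OppBip A)
    (hrev : RevOppBip A) : ¬Aperiodic A := by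
  obtain ⟨s, hs⟩ := oppBip_iff_exists_signSwitching.mp hopp
  obtain ⟨s', hs'⟩ := revOppBip_iff_exists_signSwitching.mp hrev
  intro hap
  obtain ⟨i⟩ : Nonempty (Fin n) := inferInstance
  suffices ∀ k, 1 ≤ k → 0 < (absMat A ^ k) i i → 2 ∣ k by
    simpa using hap i 2 this
  intro k _ hk
  rw [← even_iff_two_dvd]
  by_contra hodd
  have h := (hs.pow_apply_self k i).symm.trans (hs'.pow_apply_self k i)
  rw [one_pow, one_mul, (Nat.not_even_iff_odd.mp hodd).neg_one_pow] at h
  linarith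

lemma revOppBip_iff_not_aperiodic [Nonempty (Fin n)] (hsym : A.IsSymm)
    (hrow : ∀ i, ∑ j, |A i j| = 1) (hsc : StronglyConnected A) (hopp : OppBip A) :
    RevOppBip A ↔ ¬Aperiodic A := by
  refine ⟨not_aperiodic_of_oppBip_of_revOppBip hopp, fun hap => ?_⟩
  obtain ⟨s, hs⟩ := oppBip_iff_exists_signSwitching.mp hopp
  obtain ⟨w, hw, halt⟩ := exists_alternating_of_not_aperiodic hsym hrow hsc hap
  exact revOppBip_iff_exists_signSwitching.mpr ⟨s * w, hs.mul_of_alternating hw halt⟩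

lemma oppBip_of_tendsto_pow_mulVec (hrow : ∀ i, ∑ j, |A i j| = 1) (hsc : StronglyConnected A)
    {b L : Fin n → ℝ} (h : Tendsto (fun t => (A ^ t) *ᵥ b) atTop (𝓝 L)) (hL : L ≠ 0) :
    OppBip A := by
  obtain ⟨-, -, s, hs, -⟩ := exists_signSwitching_of_mulVec_eq_smul hrow hsc abs_one
    ((mulVec_eq_of_tendsto_pow_mulVec h).trans (one_smul ℝ L).symm) hL
  exact oppBip_iff_exists_signSwitching.mpr ⟨s, hs⟩

lemma isPolarization_of_tendsto_pow_mulVec (hrow : ∀ i, ∑ j, |A i j| = 1)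
    (hsc : StronglyConnected A) {b L : Fin n → ℝ}
    (h : Tendsto (fun t => (A ^ t) *ᵥ b) atTop (𝓝 L)) : IsPolarization L := by
  rcases eq_or_ne L 0 with rfl | hL
  · exact ⟨0, 0, fun _ => Or.inl rfl⟩
  obtain ⟨M, -, s, hs, rfl⟩ := exists_signSwitching_of_mulVec_eq_smul hrow hsc abs_one
    ((mulVec_eq_of_tendsto_pow_mulVec h).trans (one_smul ℝ L).symm) hL
  exact ⟨M, -M, fun i => by rcases hs.1 i with h | h <;> simp [h]⟩

lemma exists_tendsto_pow_mulVec_of_not_revOppBip (hsym : A.IsSymm)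
    (hrow : ∀ i, ∑ j, |A i j| = 1) (hsc : StronglyConnected A) (hrev : ¬RevOppBip A)
    (b : Fin n → ℝ) : ∃ L, Tendsto (fun t => (A ^ t) *ᵥ b) atTop (𝓝 L) := by
  refine hsym.exists_tendsto_pow_mulVec (fun i => (hrow i).le) (fun v hv => ?_) b
  by_contra hv0
  obtain ⟨-, -, s, hs, -⟩ := exists_signSwitching_of_mulVec_eq_smul hrow hsc (c := -1)
    (by simp) (hv.trans (neg_one_smul ℝ v).symm) hv0
  exact hrev (revOppBip_iff_exists_signSwitching.mpr ⟨s, hs⟩)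

lemma divergent_of_revOppBip [Nonempty (Fin n)] (hrow : ∀ i, ∑ j, |A i j| = 1)
    (hrev : RevOppBip A) : Divergent A := by
  obtain ⟨s, hs⟩ := revOppBip_iff_exists_signSwitching.mp hrev
  exact ⟨s, fun ⟨L, hL⟩ => not_tendsto_pow_mulVec_of_mulVec_eq_neg
    ((hs.mulVec_eq hrow).trans (neg_one_smul ℝ s)) hs.ne_zero L hL⟩

lemma exists_tendsto_pow_mulVec_ne_zero_of_oppBip [Nonempty (Fin n)]
    (hrow : ∀ i, ∑ j, |A i j| = 1) (hopp : OppBip A) :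
    ∃ b L : Fin n → ℝ, Tendsto (fun t => (A ^ t) *ᵥ b) atTop (𝓝 L) ∧ L ≠ 0 := by
  obtain ⟨s, hs⟩ := oppBip_iff_exists_signSwitching.mp hopp
  refine ⟨s, s, ?_, hs.ne_zero⟩
  simp [pow_mulVec_of_mulVec_eq_smul (hs.mulVec_eq hrow)]

theorem stmt_12_general (n : ℕ) (hn : 2 ≤ n) (A : Matrix (Fin n) (Fin n) ℝ)
    (hsym : A.IsSymm) (hrow : ∀ i, ∑ j, |A i j| = 1)
    (hsc : StronglyConnected A) :
    (InducesNontrivialPolarization A ↔ (OppBip A ∧ Aperiodic A)) ∧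
    (Divergent A ↔ RevOppBip A) ∧
    (NeutralConsensus A ↔ (¬ OppBip A ∧ ¬ RevOppBip A)) := by
  have : Nonempty (Fin n) := ⟨⟨0, by omega⟩⟩
  have hconv := exists_tendsto_pow_mulVec_of_not_revOppBip hsym hrow hsc
  have hdiv : Divergent A ↔ RevOppBip A :=
    ⟨fun ⟨b, hb⟩ => by_contra fun hrev => hb (hconv hrev b), divergent_of_revOppBip hrow⟩
  refine ⟨⟨?_, ?_⟩, hdiv, ⟨?_, ?_⟩⟩
  · rintro ⟨hpol, b, L, hL, hL0⟩
    have hopp := oppBip_of_tendsto_pow_mulVec hrow hsc hL hL0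
    refine ⟨hopp, not_not.mp fun hap => ?_⟩
    obtain ⟨b', hb'⟩ := hdiv.mpr ((revOppBip_iff_not_aperiodic hsym hrow hsc hopp).mpr hap)
    obtain ⟨L', hL', -⟩ := hpol b'
    exact hb' ⟨L', hL'⟩
  · rintro ⟨hopp, hap⟩
    have hrev : ¬RevOppBip A := fun h => (revOppBip_iff_not_aperiodic hsym hrow hsc hopp).mp h hap
    refine ⟨fun b => ?_, exists_tendsto_pow_mulVec_ne_zero_of_oppBip hrow hopp⟩
    obtain ⟨L, hL⟩ := hconv hrev b
    exact ⟨L, hL, isPolarization_of_tendsto_pow_mulVec hrow hsc hL⟩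
  · refine fun hneu => ⟨fun hopp => ?_, fun hrev => ?_⟩
    · obtain ⟨b, L, hL, hL0⟩ := exists_tendsto_pow_mulVec_ne_zero_of_oppBip hrow hopp
      exact hL0 (tendsto_nhds_unique hL (hneu b))
    · obtain ⟨b, hb⟩ := hdiv.mpr hrev
      exact hb ⟨0, hneu b⟩
  · rintro ⟨hopp, hrev⟩ b
    obtain ⟨L, hL⟩ := hconv hrev b
    obtain rfl : L = 0 := not_not.mp fun hL0 => hopp (oppBip_of_tendsto_pow_mulVec hrow hsc hL hL0)
    exact hL

/-- full trichotomy for strongly connected signed interaction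
matrices. -/
theorem stmt_12 (n : ℕ) (hn : 2 ≤ n) (A : Matrix (Fin n) (Fin n) ℝ)
    (hsym : A.IsSymm) (hdiag : ∀ i, A i i = 0) (hrow : ∀ i, ∑ j, |A i j| = 1)
    (hsc : StronglyConnected A) :
    (InducesNontrivialPolarization A ↔ (OppBip A ∧ Aperiodic A)) ∧
    (Divergent A ↔ RevOppBip A) ∧
    (NeutralConsensus A ↔ (¬ OppBip A ∧ ¬ RevOppBip A)) :=
  stmt_12_general n hn A hsym hrow hsc
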